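/- arXiv:1704.03109 — 4 statements merged into one kernel-verified Lean document; each statement's English description precedes it below -/
import Mathlib

section
/- Let O be a valuation ring with maximal ideal m, fraction field K and residue field k = O/m. Let B = O[X₁,…,X_d] be the polynomial ring in d variables over O, and let p ⊆ B be the set of polynomials all of whose coefficients lie in m; equivalently, p is the kernel of the coefficientwise reduction map B → k[X₁,…,X_d]. Then p is a prime ideal of B, and the localization B_p of B at p is again a valuation ring. -/
/-!
Over a valuation ring the coefficients of a polynomial are totally ordered by divisibility, so
every polynomial factors as `C c * f₁` where `f₁` has a coefficient equal to `1`. Such an `f₁`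
lies outside the Gauss prime `p` and becomes a unit in `B_p`; hence every element of `B_p` is
associated to a constant `c ∈ O`, and divisibility in `B_p` is total because it is in `O`.
-/

open MvPolynomial IsLocalRing

theorem IsLocalization.dvd_total_of_dvd_total_algebraMap {R S : Type*} [CommRing R] [CommRing S]
    [Algebra R S] (M : Submonoid R) [IsLocalization M S]
    (h : ∀ a b : R, algebraMap R S a ∣ algebraMap R S b ∨ algebraMap R S b ∣ algebraMap R S a)
    (x y : S) : x ∣ y ∨ y ∣ x := by
  have associated_algebraMap (z : S) : ∃ a : R, Associated z (algebraMap R S a) := by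
    obtain ⟨⟨a, s⟩, hz⟩ := IsLocalization.surj M z
    exact ⟨a, ⟨(IsLocalization.map_units S s).unit, hz⟩⟩
  obtain ⟨a, hxa⟩ := associated_algebraMap x
  obtain ⟨b, hyb⟩ := associated_algebraMap y
  rw [hxa.dvd_iff_dvd_left, hyb.dvd_iff_dvd_right, hxa.dvd_iff_dvd_right, hyb.dvd_iff_dvd_left]
  exact h a b

namespace MvPolynomial

variable {σ O : Type*} [CommRing O] [IsDomain O] [ValuationRing O]

theorem exists_eq_C_mul_of_coeff_eq_one (f : MvPolynomial σ O) :
    ∃ (c : O) (f₁ : MvPolynomial σ O) (m : σ →₀ ℕ), f = C c * f₁ ∧ f₁.coeff m = 1 := by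
  classical
  rcases eq_or_ne f 0 with rfl | hf
  · exact ⟨0, 1, 0, by simp, by simp⟩
  obtain ⟨m, hm, hmax⟩ := f.support.exists_max_image (fun n ↦ Ideal.span {f.coeff n})
    (support_nonempty.mpr hf)
  have hdvd : C (f.coeff m) ∣ f := by
    refine (C_dvd_iff_dvd_coeff _ _).mpr fun n ↦ ?_
    by_cases hn : n ∈ f.support
    · exact Ideal.span_singleton_le_span_singleton.mp (hmax n hn)
    · simp [notMem_support_iff.mp hn]
  obtain ⟨f₁, hf₁⟩ := hdvd
  refine ⟨f.coeff m, f₁, m, hf₁, mul_left_cancel₀ (mem_support_iff.mp hm) ?_⟩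
  conv_rhs => rw [hf₁]
  rw [coeff_C_mul, mul_one]

theorem exists_associated_algebraMap_C (p : Ideal (MvPolynomial σ O)) [p.IsPrime]
    (hp : p ≤ RingHom.ker (map (residue O))) (f : MvPolynomial σ O) :
    ∃ c : O, Associated (algebraMap (MvPolynomial σ O) (Localization.AtPrime p) (C c))
      (algebraMap (MvPolynomial σ O) (Localization.AtPrime p) f) := by
  obtain ⟨c, f₁, m, rfl, hf₁⟩ := exists_eq_C_mul_of_coeff_eq_one f
  have hf₁p : f₁ ∉ p := fun hmem ↦ by
    have := congr_arg (coeff m) (RingHom.mem_ker.mp (hp hmem))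
    simp [coeff_map, hf₁] at this
  refine ⟨c, (IsLocalization.map_units _ (⟨f₁, hf₁p⟩ : p.primeCompl)).unit, ?_⟩
  simp

end MvPolynomial

/-- Let `O` be a valuation ring with maximal ideal `m`, and let
`B = O[X₁,…,X_d]` be a polynomial ring over `O`.  Let `p ⊆ B` be the ideal of
polynomials all of whose coefficients lie in `m`.  Then `p` is prime and the
localization `B_p` is again a valuation ring. -/
theorem polynomial_localization_at_gauss_prime_is_valuationRing
    (O : Type) [CommRing O] [IsDomain O] [ValuationRing O]
    (d : ℕ) (p : Ideal (MvPolynomial (Fin d) O))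
    (hpdef : ∀ f : MvPolynomial (Fin d) O,
      f ∈ p ↔ ∀ m : Fin d →₀ ℕ, MvPolynomial.coeff m f ∈ IsLocalRing.maximalIdeal O) :
    ∃ (hp : p.IsPrime) (_ : IsDomain (Localization.AtPrime p)),
      ValuationRing (Localization.AtPrime p) := by
  have hker : p = RingHom.ker (map (residue O)) := by
    ext f
    simp [hpdef, MvPolynomial.ext_iff, coeff_map, residue_eq_zero_iff]
  have hp : p.IsPrime := hker ▸ RingHom.ker_isPrime _
  have hdom : IsDomain (Localization.AtPrime p) :=
    IsLocalization.isDomain_localization p.primeCompl_le_nonZeroDivisors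
  refine ⟨hp, hdom, (ValuationRing.iff_dvd_total).mpr ⟨?_⟩⟩
  refine IsLocalization.dvd_total_of_dvd_total_algebraMap p.primeCompl fun f g ↦ ?_
  obtain ⟨a, ha⟩ := exists_associated_algebraMap_C p hker.le f
  obtain ⟨b, hb⟩ := exists_associated_algebraMap_C p hker.le g
  rw [← ha.dvd_iff_dvd_left, ← hb.dvd_iff_dvd_right, ← ha.dvd_iff_dvd_right,
    ← hb.dvd_iff_dvd_left]
  exact (ValuationRing.dvd_total a b).imp (map_dvd _ ∘ map_dvd C) (map_dvd _ ∘ map_dvd C)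
end

section
/- Let O be a valuation ring with maximal ideal m and residue field k = O/m. Let B = O[X₁,…,X_d] be the polynomial ring over O, let p ⊆ B be the prime ideal of polynomials all of whose coefficients lie in m, and let B_p be the localization of B at p. Then for every element x of B_p there exists an element a ∈ O such that x·B_p = a·B_p as ideals of B_p. (That is, the valuation ring B_p is unramified over O: it has the same value group as O.) -/
/-!
Among the finitely many coefficients of a polynomial over a valuation ring one divides all the
others, so every `f` factors as `C a * g` with some coefficient of `g` equal to `1`. Such a `g`
lies outside the Gauss prime `p`, hence is a unit in `B_p`, and `f / s` generates the same ideal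
of `B_p` as `a`.
-/

theorem PreValuationRing.exists_mem_forall_dvd {R ι : Type*} [Monoid R] [PreValuationRing R]
    {s : Finset ι} (hs : s.Nonempty) (c : ι → R) : ∃ i ∈ s, ∀ j ∈ s, c i ∣ c j := by
  classical
  induction hs using Finset.Nonempty.cons_induction with
  | singleton i => exact ⟨i, Finset.mem_singleton_self i, by simp⟩
  | cons i s hi _ ih =>
    obtain ⟨j, hj, hjdvd⟩ := ih
    simp only [Finset.mem_cons, forall_eq_or_imp, exists_eq_or_imp]
    rcases ValuationRing.dvd_total (c i) (c j) with hij | hji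
    · exact .inl ⟨dvd_rfl, fun k hk => hij.trans (hjdvd k hk)⟩
    · exact .inr ⟨j, hj, hji, hjdvd⟩

namespace MvPolynomial

theorem exists_eq_C_mul_and_coeff_eq_one {σ O : Type*} [CommRing O] [IsDomain O]
    [ValuationRing O] (f : MvPolynomial σ O) :
    ∃ (a : O) (g : MvPolynomial σ O) (m : σ →₀ ℕ), f = C a * g ∧ coeff m g = 1 := by
  rcases eq_or_ne f 0 with rfl | hf
  · exact ⟨0, 1, 0, by simp, coeff_zero_one⟩
  obtain ⟨m, hm, hdvd⟩ :=
    PreValuationRing.exists_mem_forall_dvd (support_nonempty.2 hf) (coeff · f)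
  have hC : C (coeff m f) ∣ f := by
    refine (C_dvd_iff_dvd_coeff _ _).2 fun n => ?_
    by_cases hn : n ∈ f.support
    · exact hdvd n hn
    · simp [notMem_support_iff.1 hn]
  obtain ⟨g, hg⟩ := hC
  refine ⟨coeff m f, g, m, hg, mul_left_cancel₀ (mem_support_iff.1 hm) ?_⟩
  calc coeff m f * coeff m g = coeff m (C (coeff m f) * g) := (coeff_C_mul _ _ _).symm
    _ = coeff m f * 1 := by rw [← hg, mul_one]

end MvPolynomial

/-- Let `O` be a valuation ring with maximal ideal `m`, let
`B = O[X₁,…,X_d]`, let `p ⊆ B` be the prime ideal of polynomials all of whose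
coefficients lie in `m`, and let `B_p` be the localization of `B` at `p`.  Then every
element of `B_p` generates the same ideal as (the image of) some element `a` of `O`:
the valuation ring `B_p` is unramified over `O`, i.e. has the same value group. -/
theorem localization_at_gauss_prime_unramified
    (O : Type) [CommRing O] [IsDomain O] [ValuationRing O]
    (d : ℕ) (p : Ideal (MvPolynomial (Fin d) O))
    (hpdef : ∀ f : MvPolynomial (Fin d) O,
      f ∈ p ↔ ∀ m : Fin d →₀ ℕ, MvPolynomial.coeff m f ∈ IsLocalRing.maximalIdeal O)
    (hp : p.IsPrime) :
    ∀ x : Localization.AtPrime p, ∃ a : O,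
      Ideal.span {x} =
        Ideal.span {algebraMap (MvPolynomial (Fin d) O) (Localization.AtPrime p)
          (MvPolynomial.C a)} := by
  intro x
  obtain ⟨⟨f, s⟩, rfl⟩ := IsLocalization.mk'_surjective p.primeCompl x
  obtain ⟨a, g, m, rfl, hg⟩ := MvPolynomial.exists_eq_C_mul_and_coeff_eq_one f
  have hgp : g ∉ p := fun hg_mem => by
    simpa [hg] using (hpdef g).1 hg_mem m
  have hunit : IsUnit (IsLocalization.mk' (Localization.AtPrime p) g s) :=
    (IsLocalization.AtPrime.isUnit_mk'_iff _ p g s).2 hgp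
  refine ⟨a, ?_⟩
  dsimp only
  rw [← IsLocalization.mul_mk'_eq_mk'_of_mul, Ideal.span_singleton_mul_right_unit hunit]
end

section
/- Let O be a valuation ring with maximal ideal m and residue field k = O/m. Let B = O[X₁,…,X_d] be the polynomial ring over O, let p ⊆ B be the prime ideal of polynomials all of whose coefficients lie in m, and let B_p be the localization of B at p. Then for every π ∈ m, the natural ring map B/πB → B_p/πB_p is injective; equivalently, if f ∈ B lies in the ideal πB_p of B_p, then all coefficients of f are divisible by π, i.e., f ∈ πB. -/
open MvPolynomial

/-- In a valuation ring, any nonempty finite family has a member dividing all others. -/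
theorem exists_dvd_all_of_valuationRing {O : Type} [CommRing O] [IsDomain O] [ValuationRing O]
    {ι : Type*} (s : Finset ι) (hs : s.Nonempty) (g : ι → O) :
    ∃ a ∈ s, ∀ b ∈ s, g a ∣ g b := by
  classical
  induction s using Finset.induction_on with
  | empty => exact absurd hs (by simp)
  | @insert a t _ ih =>
    by_cases ht : t.Nonempty
    · obtain ⟨b, hb, hdvd⟩ := ih ht
      rcases ValuationRing.dvd_total (g a) (g b) with h1 | h1
      · refine ⟨a, Finset.mem_insert_self a t, fun c hc => ?_⟩
        rcases Finset.mem_insert.1 hc with rfl | hc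
        · exact dvd_rfl
        · exact h1.trans (hdvd c hc)
      · refine ⟨b, Finset.mem_insert_of_mem hb, fun c hc => ?_⟩
        rcases Finset.mem_insert.1 hc with rfl | hc
        · exact h1
        · exact hdvd c hc
    · rw [Finset.not_nonempty_iff_eq_empty] at ht
      subst ht
      exact ⟨a, Finset.mem_insert_self a _, fun c hc => by
        rcases Finset.mem_insert.1 hc with rfl | hc
        · exact dvd_rfl
        · simp at hc⟩

/-- Let `O` be a valuation ring with maximal ideal `m`, let
`B = O[X₁,…,X_d]`, let `p ⊆ B` be the prime ideal of polynomials all of whose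
coefficients lie in `m`, and let `B_p` be the localization of `B` at `p`.  Then for
every `π ∈ m` the natural ring map `B/πB → B_p/πB_p` is injective. -/
theorem quotient_map_to_localization_injective
    (O : Type) [CommRing O] [IsDomain O] [ValuationRing O]
    (d : ℕ) (p : Ideal (MvPolynomial (Fin d) O))
    (hpdef : ∀ f : MvPolynomial (Fin d) O,
      f ∈ p ↔ ∀ m : Fin d →₀ ℕ, MvPolynomial.coeff m f ∈ IsLocalRing.maximalIdeal O)
    (hp : p.IsPrime)
    (π : O) (hπ : π ∈ IsLocalRing.maximalIdeal O) :
    Function.Injective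
      (Ideal.quotientMap (I := Ideal.span {MvPolynomial.C π})
        (Ideal.span {algebraMap (MvPolynomial (Fin d) O) (Localization.AtPrime p)
          (MvPolynomial.C π)})
        (algebraMap (MvPolynomial (Fin d) O) (Localization.AtPrime p))
        (by rw [← Ideal.map_le_iff_le_comap, Ideal.map_span, Set.image_singleton])) := by
  classical
  apply Ideal.quotientMap_injective'
  intro f hf
  rw [Ideal.mem_comap] at hf
  have hf' : algebraMap (MvPolynomial (Fin d) O) (Localization.AtPrime p) f ∈
      Ideal.map (algebraMap (MvPolynomial (Fin d) O) (Localization.AtPrime p))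
        (Ideal.span {MvPolynomial.C π}) := by
    rw [Ideal.map_span, Set.image_singleton]; exact hf
  obtain ⟨⟨⟨a, ha⟩, s⟩, hx⟩ := (IsLocalization.mem_map_algebraMap_iff p.primeCompl _).mp hf'
  have heq : f * (s : MvPolynomial (Fin d) O) = a := by
    apply IsLocalization.injective (Localization.AtPrime p) p.primeCompl_le_nonZeroDivisors
    rw [map_mul]
    exact hx
  have hs : (s : MvPolynomial (Fin d) O) ∉ p := s.2
  rw [Ideal.mem_span_singleton] at ha ⊢
  rw [← heq] at ha
  -- ha : C π ∣ f * s ; goal : C π ∣ f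
  by_cases hf0 : f = 0
  · simp [hf0]
  -- find a coefficient of f dividing all others
  have hsupp : f.support.Nonempty := by
    rw [Finset.nonempty_iff_ne_empty, Ne, MvPolynomial.support_eq_empty]
    exact hf0
  obtain ⟨m₀, hm₀, hdvd⟩ := exists_dvd_all_of_valuationRing f.support hsupp
    (fun m => MvPolynomial.coeff m f)
  set c := MvPolynomial.coeff m₀ f with hc
  have hc0 : c ≠ 0 := MvPolynomial.mem_support_iff.mp hm₀
  have hCc : MvPolynomial.C c ∣ f := by
    rw [MvPolynomial.C_dvd_iff_dvd_coeff]
    intro i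
    by_cases hi : i ∈ f.support
    · exact hdvd i hi
    · simp [MvPolynomial.notMem_support_iff.mp hi]
  obtain ⟨f', hf'eq⟩ := hCc
  have hcoef1 : MvPolynomial.coeff m₀ f' = 1 := by
    have : c = c * MvPolynomial.coeff m₀ f' := by
      conv_lhs => rw [hc, hf'eq, MvPolynomial.coeff_C_mul]
    exact (mul_left_cancel₀ hc0 (by rw [← this, mul_one])).symm
  have hf'p : f' ∉ p := fun h => by
    have := (hpdef f').mp h m₀
    rw [hcoef1] at this
    exact (Ideal.ne_top_iff_one _).mp (IsLocalRing.maximalIdeal.isMaximal O).ne_top this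
  have hsf' : (s : MvPolynomial (Fin d) O) * f' ∉ p := fun h =>
    (hp.mem_or_mem h).elim hs hf'p
  rw [hpdef] at hsf'
  push_neg at hsf'
  obtain ⟨m₁, hm₁⟩ := hsf'
  have hu : IsUnit (MvPolynomial.coeff m₁ ((s : MvPolynomial (Fin d) O) * f')) := by
    by_contra h
    exact hm₁ h
  -- π divides coeff m₁ (f * s) = c * coeff m₁ (s * f')
  have hdiv : π ∣ c * MvPolynomial.coeff m₁ ((s : MvPolynomial (Fin d) O) * f') := by
    have h2 : π ∣ MvPolynomial.coeff m₁ (f * (s : MvPolynomial (Fin d) O)) := by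
      rw [MvPolynomial.C_dvd_iff_dvd_coeff] at ha
      exact ha m₁
    rwa [hf'eq, mul_assoc, mul_comm f' ((s : MvPolynomial (Fin d) O)),
      MvPolynomial.coeff_C_mul] at h2
  have hπc : π ∣ c := (hu.dvd_mul_right).mp hdiv
  calc MvPolynomial.C π ∣ MvPolynomial.C c := by
        rw [MvPolynomial.C_dvd_iff_dvd_coeff]
        intro i
        rw [MvPolynomial.coeff_C]
        split
        · exact hπc
        · exact dvd_zero π
    _ ∣ f := ⟨f', hf'eq⟩
end

section
/- Let O be a valuation ring with maximal ideal m and residue field k = O/m. Let B = O[X₁,…,X_d] be the polynomial ring over O, let p ⊆ B be the prime ideal of polynomials all of whose coefficients lie in m, and let B_p be the localization of B at p. Then for every π ∈ m, the natural map B/πB → B_p/πB_p is universally injective as a map of O-modules: for every O-module N, the induced map N ⊗_O (B/πB) → N ⊗_O (B_p/πB_p) is injective. -/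
/-!
Tensoring the exact sequences `B →π B → B/πB → 0` and `B_p →π B_p → B_p/πB_p → 0` with `N`
identifies the map with `M/πM → (M/πM)_p` for `M = B ⊗ N`, so it is injective as soon as no
`s ∉ p` is a zero divisor on `M/πM ≅ B ⊗ N/πN`. A polynomial `s ∉ p` has a unit coefficient, and
McCoy's argument shows that such an `s` is a nonzerodivisor on `B ⊗ Q = Q[X₁,…,X_d]` for every
`O`-module `Q`: if `s • x = 0` and `a` is the lex-largest coefficient of `s` with `a • x ≠ 0`,
comparing leading terms shows that `a` kills the leading coefficient of `x`, so `a • x` has fewer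
terms than `x` and is still killed by `s`; by induction on the number of terms, `a • x = 0`.
Hence every coefficient of `s` kills `x`, in particular the unit one.
-/

open TensorProduct Finset.HasAntidiagonal

namespace MvPolynomial

variable {R σ N : Type*} [CommRing R] [AddCommGroup N] [Module R N]

open Classical in
noncomputable def scalarRTensor : MvPolynomial σ R ⊗[R] N ≃ₗ[R] (σ →₀ ℕ) →₀ N :=
  (TensorProduct.congr (AddMonoidAlgebra.coeffLinearEquiv R) (LinearEquiv.refl R N)).trans
    (TensorProduct.finsuppScalarLeft R N _)

open Classical in
@[simp]
lemma scalarRTensor_tmul_apply (p : MvPolynomial σ R) (n : N) (μ : σ →₀ ℕ) :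
    scalarRTensor (p ⊗ₜ[R] n) μ = coeff μ p • n :=
  finsuppScalarLeft_apply_tmul_apply (AddMonoidAlgebra.coeffLinearEquiv R p) n μ

lemma scalarRTensor_smul_apply [DecidableEq σ] (s : MvPolynomial σ R)
    (x : MvPolynomial σ R ⊗[R] N) (μ : σ →₀ ℕ) :
    scalarRTensor (s • x) μ = ∑ ij ∈ antidiagonal μ, coeff ij.1 s • scalarRTensor x ij.2 := by
  induction x using TensorProduct.induction_on with
  | zero => simp
  | tmul p n => simp [smul_tmul', coeff_mul, Finset.sum_smul, mul_smul]
  | add x y hx hy => simp [smul_add, hx, hy, Finset.sum_add_distrib]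

lemma coeff_smul_scalarRTensor_apply_eq_zero_of_smul_eq_zero [LinearOrder σ] {s : MvPolynomial σ R}
    {x : MvPolynomial σ R ⊗[R] N} (hsx : s • x = 0) {T : σ →₀ ℕ}
    (hT : ∀ j ∈ (scalarRTensor x).support, toLex j ≤ toLex T) {m : σ →₀ ℕ}
    (hm : ∀ i, toLex m < toLex i → coeff i s • x = 0) :
    coeff m s • scalarRTensor x T = 0 := by
  have htop := scalarRTensor_smul_apply s x (m + T)
  rw [hsx, map_zero, Finsupp.zero_apply, eq_comm,
    Finset.sum_eq_single_of_mem (m, T) (by simp)] at htop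
  · exact htop
  rintro ⟨i, j⟩ hij hne
  rw [mem_antidiagonal] at hij
  rcases lt_trichotomy (toLex i) (toLex m) with hlt | heq | hgt
  · have hj : j ∉ (scalarRTensor x).support := fun hj ↦
      (add_lt_add_of_lt_of_le hlt (hT j hj)).ne congr(toLex $hij)
    rw [Finsupp.notMem_support_iff.mp hj, smul_zero]
  · obtain rfl : i = m := toLex.injective heq
    exact absurd (by simpa using hij) hne
  · rw [← Finsupp.smul_apply, ← map_smul, hm i hgt, map_zero, Finsupp.zero_apply]

lemma coeff_smul_eq_zero_of_smul_eq_zero [LinearOrder σ] {s : MvPolynomial σ R}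
    {x : MvPolynomial σ R ⊗[R] N} (hsx : s • x = 0)
    (ih : ∀ y : MvPolynomial σ R ⊗[R] N,
      (scalarRTensor y).support.card < (scalarRTensor x).support.card → s • y = 0 → y = 0)
    (i : σ →₀ ℕ) : coeff i s • x = 0 := by
  classical
  by_contra! hx
  have hne (i : σ →₀ ℕ) (hi : coeff i s • x ≠ 0) : i ∈ s.support.filter (coeff · s • x ≠ 0) := by
    simpa using ⟨fun h0 ↦ hi (by simp [h0]), hi⟩
  obtain ⟨m, hm, hmax⟩ := (s.support.filter (coeff · s • x ≠ 0)).exists_max_image toLex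
    ⟨i, hne i hx⟩
  have hmx : coeff m s • x ≠ 0 := (Finset.mem_filter.mp hm).2
  obtain ⟨T, hT, hTmax⟩ := (scalarRTensor x).support.exists_max_image toLex <|
    Finsupp.support_nonempty_iff.mpr fun h ↦
      hmx (by rw [scalarRTensor.map_eq_zero_iff.mp h, smul_zero])
  have hmT : coeff m s • scalarRTensor x T = 0 :=
    coeff_smul_scalarRTensor_apply_eq_zero_of_smul_eq_zero hsx hTmax fun i hi ↦ by
      by_contra h
      exact not_lt_of_ge (hmax i (hne i h)) hi
  refine hmx (ih _ ?_ (by rw [smul_comm, hsx, smul_zero]))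
  rw [map_smul]
  exact Finset.card_lt_card <| (Finset.ssubset_iff_of_subset Finsupp.support_smul).mpr
    ⟨T, hT, by simpa using hmT⟩

theorem isSMulRegular_tensor_of_isUnit_coeff {s : MvPolynomial σ R} {m₀ : σ →₀ ℕ}
    (hs : IsUnit (coeff m₀ s)) : IsSMulRegular (MvPolynomial σ R ⊗[R] N) s := by
  let _ : LinearOrder σ := WellOrderingRel.isWellOrder.linearOrder
  refine (isSMulRegular_iff_right_eq_zero_of_smul (R := MvPolynomial σ R)
    (M := MvPolynomial σ R ⊗[R] N)).mpr fun x ↦ ?_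
  induction hcard : (scalarRTensor x).support.card using Nat.strong_induction_on
    generalizing x with
  | _ n ih =>
    intro hsx
    refine hs.smul_left_cancel.mp ?_
    rw [smul_zero, coeff_smul_eq_zero_of_smul_eq_zero hsx fun y hy ↦ ih _ (hcard ▸ hy) y rfl]

end MvPolynomial

section QuotientTensor

variable {O B : Type*} [CommRing O] [CommRing B] [Algebra O B]
  (N : Type*) [AddCommGroup N] [Module O N]

lemma exact_mulLeft_mkₐ_span_singleton (c : B) :
    Function.Exact (LinearMap.mulLeft O c) (Ideal.Quotient.mkₐ O (Ideal.span {c})).toLinearMap := by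
  intro y
  simp [Ideal.Quotient.eq_zero_iff_mem, Ideal.mem_span_singleton', mul_comm]

lemma rTensor_mulLeft_apply (c : B) (x : B ⊗[O] N) :
    (LinearMap.mulLeft O c).rTensor N x = c • x := by
  induction x using TensorProduct.induction_on with
  | zero => simp
  | tmul b n => simp [smul_tmul']
  | add x y hx hy => simp [hx, hy]

lemma rTensor_mkₐ_span_singleton_eq_zero_iff (c : B) (x : B ⊗[O] N) :
    (Ideal.Quotient.mkₐ O (Ideal.span {c})).toLinearMap.rTensor N x = 0 ↔ ∃ y, c • y = x := by
  rw [rTensor_exact N (exact_mulLeft_mkₐ_span_singleton c) Ideal.Quotient.mk_surjective x]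
  simp [rTensor_mulLeft_apply]

end QuotientTensor

theorem lTensor_quotientMapₐ_injective_of_saturated {O B : Type*} [CommRing O] [CommRing B]
    [Algebra O B] (S : Submonoid B) (L : Type*) [CommRing L] [Algebra B L] [Algebra O L]
    [IsScalarTower O B L] [IsLocalization S L] (c : B) (N : Type*) [AddCommGroup N] [Module O N]
    (hS : ∀ s ∈ S, ∀ x y : B ⊗[O] N, s • x = c • y → ∃ z, c • z = x)
    (h : Ideal.span {c} ≤ (Ideal.span {algebraMap B L c}).comap (IsScalarTower.toAlgHom O B L)) :
    Function.Injective ((Ideal.quotientMapₐ (Ideal.span {algebraMap B L c})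
      (IsScalarTower.toAlgHom O B L) h).toLinearMap.lTensor N) := by
  rw [LinearMap.lTensor_inj_iff_rTensor_inj, injective_iff_map_eq_zero]
  intro x hx
  obtain ⟨x, rfl⟩ := LinearMap.rTensor_surjective N
    (g := (Ideal.Quotient.mkₐ O (Ideal.span {c})).toLinearMap) Ideal.Quotient.mk_surjective x
  have hcomp : (Ideal.quotientMapₐ _ _ h).toLinearMap ∘ₗ
      (Ideal.Quotient.mkₐ O (Ideal.span {c})).toLinearMap =
      (Ideal.Quotient.mkₐ O (Ideal.span {algebraMap B L c})).toLinearMap ∘ₗ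
      (IsScalarTower.toAlgHom O B L).toLinearMap := by
    ext; simp
  rw [← LinearMap.comp_apply, ← LinearMap.rTensor_comp, hcomp, LinearMap.rTensor_comp,
    LinearMap.comp_apply, rTensor_mkₐ_span_singleton_eq_zero_iff] at hx
  obtain ⟨y, hy⟩ := hx
  -- `f` is `rTensor N (B → L)` seen as a `B`-linear map, which makes it a localization at `S`
  let f := AlgebraTensorModule.rTensor O N (Algebra.linearMap B L)
  obtain ⟨⟨z, s⟩, hz⟩ := IsLocalizedModule.surj S f y
  rw [Submonoid.smul_def] at hz
  have hfx : f ((s : B) • x) = f (c • z) := by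
    rw [map_smul, map_smul, ← hz, smul_comm, ← algebraMap_smul L c y, hy]
    rfl
  obtain ⟨t, ht⟩ := IsLocalizedModule.exists_of_eq (S := S) hfx
  simp only [Submonoid.smul_def] at ht
  obtain ⟨w, hw⟩ := hS (t * s) (mul_mem t.2 s.2) x ((t : B) • z) (by
    rw [mul_smul, ht, smul_comm])
  exact (rTensor_mkₐ_span_singleton_eq_zero_iff N c x).mpr ⟨w, hw⟩

open Pointwise in
lemma exists_algebraMap_smul_eq_of_isSMulRegular {O B N : Type*} [CommRing O] [CommRing B]
    [Algebra O B] [AddCommGroup N] [Module O N] (π : O) {s : B}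
    (hs : IsSMulRegular (B ⊗[O] (N ⧸ π • (⊤ : Submodule O N))) s) {x y : B ⊗[O] N}
    (hxy : s • x = algebraMap O B π • y) : ∃ z, algebraMap O B π • z = x := by
  have hexact := lTensor_exact B (LinearMap.exact_lsmul_mkQ_smul_top N π)
    (Submodule.mkQ_surjective _)
  have hlsmul (w : B ⊗[O] N) : (LinearMap.lsmul O N π).lTensor B w = π • w :=
    congr($(LinearMap.lTensor_smul_action (N := N) B π) w)
  have hqy : (π • ⊤ : Submodule O N).mkQ.lTensor B (π • y) = 0 := by
    simpa [hlsmul] using hexact.apply_apply_eq_zero y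
  have hqx : (π • ⊤ : Submodule O N).mkQ.lTensor B x = 0 :=
    hs.right_eq_zero_of_smul (by rw [LinearMap.smul_lTensor, hxy, algebraMap_smul, hqy])
  obtain ⟨z, hz⟩ := (hexact x).mp hqx
  exact ⟨z, by rwa [algebraMap_smul, ← hlsmul]⟩

/-- Let `O` be a valuation ring with maximal ideal `m`, let
`B = O[X₁,…,X_d]`, let `p ⊆ B` be the prime ideal of polynomials all of whose
coefficients lie in `m`, and let `B_p` be the localization of `B` at `p`.  Then for
every `π ∈ m` the natural map `B/πB → B_p/πB_p` is universally injective as a map of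
`O`-modules: for every `O`-module `N`, the induced map
`N ⊗[O] (B/πB) → N ⊗[O] (B_p/πB_p)` is injective. -/
theorem quotient_map_to_localization_universally_injective
    (O : Type) [CommRing O] [IsDomain O] [ValuationRing O]
    (d : ℕ) (p : Ideal (MvPolynomial (Fin d) O))
    (hpdef : ∀ f : MvPolynomial (Fin d) O,
      f ∈ p ↔ ∀ m : Fin d →₀ ℕ, MvPolynomial.coeff m f ∈ IsLocalRing.maximalIdeal O)
    (hp : p.IsPrime)
    (π : O) :
    ∀ (N : Type) [AddCommGroup N] [Module O N],
      Function.Injective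
        (LinearMap.lTensor N
          (Ideal.quotientMapₐ (I := Ideal.span {MvPolynomial.C π})
            (Ideal.span {algebraMap (MvPolynomial (Fin d) O) (Localization.AtPrime p)
              (MvPolynomial.C π)})
            (IsScalarTower.toAlgHom O (MvPolynomial (Fin d) O) (Localization.AtPrime p))
            (by
              rw [← Ideal.map_le_iff_le_comap, Ideal.map_span, Set.image_singleton]
              exact le_of_eq (by rw [IsScalarTower.coe_toAlgHom']))).toLinearMap) := by
  intro N _ _
  refine lTensor_quotientMapₐ_injective_of_saturated (O := O) p.primeCompl (Localization.AtPrime p)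
    _ N (fun s hs x y hxy ↦ ?_) _
  obtain ⟨m, hm⟩ : ∃ m, IsUnit (MvPolynomial.coeff m s) := by
    by_contra! h
    exact hs ((hpdef s).mpr fun m ↦ (IsLocalRing.mem_maximalIdeal _).mpr (h m))
  exact exists_algebraMap_smul_eq_of_isSMulRegular π
    (MvPolynomial.isSMulRegular_tensor_of_isUnit_coeff hm) hxy
end
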